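/- arXiv:0906.4505 — 6 statements merged into one kernel-verified Lean document; each statement's English description precedes it below -/
import Mathlib

section
/- Let A be a commutative ring and E a nonzero finitely generated A-module. The trivial ring extension R = A ⋉ E is a valuation ring if and only if A is a field and E is isomorphic to A as an A-module. -/
/-!
Units of `A ⋉ E` are the elements with unit first coordinate, and `(0, m) ∣ (0, n)` exactly when
`n ∈ A ∙ m`. If `A ⋉ E` is a valuation ring then `(a, 0) ∣ (0, m)` for every `a ≠ 0`, i.e.
`E = aE`, and Nakayama's lemma makes every such `a` a unit; over the field `A`, the comparability
of any two cyclic submodules of `E` forces `E` to be a line. Conversely, over a field every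
nonunit of `A ⋉ A` is some `(0, m)`, and any two elements of `A` are proportional.
-/

universe u

open Submodule

namespace TrivSqZeroExt

section Divisibility

variable {R M : Type*} [CommSemiring R] [AddCommMonoid M] [Module R M] [Module Rᵐᵒᵖ M]
  [IsCentralScalar R M]

theorem inr_dvd_inr_iff {m n : M} :
    (inr m : TrivSqZeroExt R M) ∣ inr n ↔ n ∈ R ∙ m := by
  rw [mem_span_singleton]
  constructor
  · rintro ⟨x, hx⟩
    refine ⟨x.fst, ?_⟩
    simpa [op_smul_eq_smul] using (congrArg snd hx).symm
  · rintro ⟨c, rfl⟩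
    exact ⟨inl c, by rw [inr_mul_inl, op_smul_eq_smul]⟩

theorem inl_dvd_inr_iff {a : R} {m : M} :
    (inl a : TrivSqZeroExt R M) ∣ inr m ↔ ∃ n : M, a • n = m := by
  constructor
  · rintro ⟨x, hx⟩
    exact ⟨x.snd, by simpa using (congrArg snd hx).symm⟩
  · rintro ⟨n, rfl⟩
    exact ⟨inr n, (inl_mul_inr a n).symm⟩

theorem eq_zero_of_inr_dvd_inl {a : R} {m : M} (h : (inr m : TrivSqZeroExt R M) ∣ inl a) :
    a = 0 := by
  obtain ⟨x, hx⟩ := h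
  simpa using congrArg fst hx

end Divisibility

theorem forall_dvd_or_dvd_iff {K M : Type*} [Field K] [AddCommGroup M]
    [Module K M] [Module Kᵐᵒᵖ M] [IsCentralScalar K M] :
    (∀ r s : TrivSqZeroExt K M, r ∣ s ∨ s ∣ r) ↔ ∀ m n : M, n ∈ K ∙ m ∨ m ∈ K ∙ n := by
  constructor
  · intro h m n
    simpa only [inr_dvd_inr_iff] using h (inr m) (inr n)
  · intro h r s
    by_cases hr : r.fst = 0
    · by_cases hs : s.fst = 0
      · obtain ⟨m, rfl⟩ : ∃ m, r = inr m := ⟨r.snd, ext hr rfl⟩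
        obtain ⟨n, rfl⟩ : ∃ n, s = inr n := ⟨s.snd, ext hs rfl⟩
        simpa only [inr_dvd_inr_iff] using h m n
      · exact Or.inr ((isUnit_iff_isUnit_fst.mpr (isUnit_iff_ne_zero.mpr hs)).dvd)
    · exact Or.inl ((isUnit_iff_isUnit_fst.mpr (isUnit_iff_ne_zero.mpr hr)).dvd)

end TrivSqZeroExt

open TrivSqZeroExt

/-- By Nakayama, `M = aM` yields some `r ≡ 1 mod a` with `rM = 0`; surjectivity of `r • ·` on
the nonzero module `M` then forces `r = 0`, so `a` is a unit. -/
theorem isField_of_smul_surjective {R M : Type*} [CommRing R] [AddCommGroup M] [Module R M]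
    [Module.Finite R M] [Nontrivial M]
    (h : ∀ a : R, a ≠ 0 → Function.Surjective fun m : M => a • m) : IsField R := by
  have : Nontrivial R := Module.nontrivial R M
  have annihilator_trivial : ∀ r : R, (∀ m : M, r • m = 0) → r = 0 := by
    intro r hr
    by_contra hr0
    obtain ⟨m, hm⟩ := exists_ne (0 : M)
    obtain ⟨n, rfl⟩ := h r hr0 m
    exact hm (hr n)
  refine ⟨exists_pair_ne R, mul_comm, fun {a} ha => ?_⟩
  have hle : (⊤ : Submodule R M) ≤ Ideal.span {a} • ⊤ := by
    rintro m -
    obtain ⟨n, rfl⟩ := h a ha m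
    exact smul_mem_smul (Ideal.mem_span_singleton_self a) mem_top
  obtain ⟨r, hr1, hr⟩ :=
    exists_sub_one_mem_and_smul_eq_zero_of_fg_of_le_smul _ ⊤ Module.Finite.fg_top hle
  obtain ⟨c, hc⟩ := Ideal.mem_span_singleton'.mp hr1
  rw [annihilator_trivial r fun m => hr m mem_top, zero_sub] at hc
  exact ⟨-c, by rw [mul_comm, neg_mul, hc, neg_neg]⟩

theorem nonempty_linearEquiv_of_forall_mem_span_singleton {K M : Type*} [Field K]
    [AddCommGroup M] [Module K M] [Nontrivial M] (h : ∀ m n : M, n ∈ K ∙ m ∨ m ∈ K ∙ n) :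
    Nonempty (M ≃ₗ[K] K) := by
  obtain ⟨e, he⟩ := exists_ne (0 : M)
  have hsurj : Function.Surjective (LinearMap.toSpanSingleton K M e) := by
    intro m
    rcases h e m with hm | he'
    · exact mem_span_singleton.mp hm
    · obtain ⟨c, hc⟩ := mem_span_singleton.mp he'
      have hc0 : c ≠ 0 := by rintro rfl; exact he (by rw [← hc, zero_smul])
      exact ⟨c⁻¹, by rw [LinearMap.toSpanSingleton_apply, ← hc, inv_smul_smul₀ hc0]⟩
  exact ⟨(LinearEquiv.ofBijective _ ⟨smul_left_injective K he, hsurj⟩).symm⟩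

theorem LinearEquiv.mem_span_singleton_or_mem {K M : Type*} [Field K]
    [AddCommGroup M] [Module K M] (ψ : M ≃ₗ[K] K) (m n : M) : n ∈ K ∙ m ∨ m ∈ K ∙ n := by
  by_cases hm : ψ m = 0
  · right
    rw [ψ.map_eq_zero_iff.mp hm]
    exact zero_mem _
  · left
    refine mem_span_singleton.mpr ⟨ψ n / ψ m, ψ.injective ?_⟩
    rw [map_smul, smul_eq_mul, div_mul_cancel₀ _ hm]

/-- Let `E` be a nonzero finitely generated module over a commutative ring `A`.  The
trivial ring extension `R = A ⋉ E` is a valuation ring if and only if `A` is a field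
and `E ≃ A` as `A`-modules. -/
theorem stmt4 (A : Type u) [CommRing A] (E : Type u) [AddCommGroup E] [Module A E]
    [Module Aᵐᵒᵖ E] [IsCentralScalar A E] [Nontrivial E] [Module.Finite A E] :
    (∀ r s : TrivSqZeroExt A E, r ∣ s ∨ s ∣ r) ↔
      IsField A ∧ Nonempty (E ≃ₗ[A] A) := by
  constructor
  · intro h
    have hA : IsField A := isField_of_smul_surjective fun a ha m =>
      (h (inl a) (inr m)).elim inl_dvd_inr_iff.mp
        fun hdvd => absurd (eq_zero_of_inr_dvd_inl hdvd) ha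
    let := hA.toField
    exact ⟨hA, nonempty_linearEquiv_of_forall_mem_span_singleton (forall_dvd_or_dvd_iff.mp h)⟩
  · rintro ⟨hA, ⟨ψ⟩⟩
    let := hA.toField
    exact forall_dvd_or_dvd_iff.mpr ψ.mem_span_singleton_or_mem
end

section
/- The trivial ring extension ℤ_p ⋉ ℚ_p of the p-adic integers by the p-adic numbers is a valuation ring, for p a prime. -/
/-!
Write `x = inl a + inr m`. When `a ≠ 0` it acts invertibly on `K`, so `inl a` divides every
`inr m` and `x` is associated to `inl a`; divisibility between such elements is thus governed
by divisibility in `R`. When both first coordinates vanish, `inr m ∣ inr n` as soon as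
`n = c • m` with `c ∈ R`, and since `R` is a valuation ring with fraction field `K`, one of
`n / m`, `m / n` lies in `R`.
-/

noncomputable instance (p : ℕ) [Fact p.Prime] : Module ℤ_[p]ᵐᵒᵖ ℚ_[p] :=
  Module.compHom ℚ_[p] ((algebraMap ℤ_[p] ℚ_[p]).comp ((RingHom.id ℤ_[p]).fromOpposite mul_comm))

instance (p : ℕ) [Fact p.Prime] : IsCentralScalar ℤ_[p] ℚ_[p] :=
  ⟨fun r m => by
    show (algebraMap ℤ_[p] ℚ_[p]) r * m = r • m
    rw [Algebra.smul_def]⟩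

namespace TrivSqZeroExt

section

variable {R M : Type*} [CommRing R] [AddCommGroup M] [Module R M] [Module Rᵐᵒᵖ M]
  [IsCentralScalar R M]

theorem inr_dvd_inr_smul (c : R) (m : M) : (inr m : TrivSqZeroExt R M) ∣ inr (c • m) :=
  ⟨inl c, by rw [inr_mul_inl, op_smul_eq_smul]⟩

end

variable {R K : Type*} [CommRing R] [Field K] [Algebra R K] [Module Rᵐᵒᵖ K] [IsCentralScalar R K]

theorem inl_dvd_inr {a : R} (ha : algebraMap R K a ≠ 0) (m : K) :
    (inl a : TrivSqZeroExt R K) ∣ inr m :=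
  ⟨inr ((algebraMap R K a)⁻¹ * m), by rw [inl_mul_inr, Algebra.smul_def, mul_inv_cancel_left₀ ha]⟩

theorem associated_inl_fst {x : TrivSqZeroExt R K} (hx : algebraMap R K x.fst ≠ 0) :
    Associated (inl x.fst) x := by
  set u : TrivSqZeroExt R K := 1 + inr ((algebraMap R K x.fst)⁻¹ * x.snd)
  have hu : IsUnit u := by simp [u, isUnit_iff_isUnit_fst]
  refine ⟨hu.unit, ?_⟩
  rw [IsUnit.unit_spec, mul_add, mul_one, inl_mul_inr, Algebra.smul_def, mul_inv_cancel_left₀ hx,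
    inl_fst_add_inr_snd_eq]

theorem dvd_of_fst_dvd [FaithfulSMul R K] {x y : TrivSqZeroExt R K} (hx : x.fst ≠ 0)
    (h : x.fst ∣ y.fst) : x ∣ y := by
  have hx' : algebraMap R K x.fst ≠ 0 :=
    (map_ne_zero_iff _ (FaithfulSMul.algebraMap_injective R K)).mpr hx
  obtain ⟨c, hc⟩ := h
  rw [← (associated_inl_fst hx').dvd_iff_dvd_left, ← inl_fst_add_inr_snd_eq y, hc, inl_mul]
  exact dvd_add (dvd_mul_right _ _) (inl_dvd_inr hx' _)

variable [IsDomain R] [ValuationRing R] [IsFractionRing R K]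

theorem inr_dvd_or_dvd_inr (m n : K) :
    (inr m : TrivSqZeroExt R K) ∣ inr n ∨ (inr n : TrivSqZeroExt R K) ∣ inr m := by
  rcases eq_or_ne m 0 with rfl | hm
  · exact Or.inr (by rw [inr_zero]; exact dvd_zero _)
  rcases eq_or_ne n 0 with rfl | hn
  · exact Or.inl (by rw [inr_zero]; exact dvd_zero _)
  obtain ⟨c, hc⟩ | ⟨c, hc⟩ := (ValuationRing.iff_isInteger_or_isInteger R K).mp ‹_› (n / m)
  · left
    convert inr_dvd_inr_smul c m
    rw [Algebra.smul_def, hc, div_mul_cancel₀ _ hm]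
  · right
    convert inr_dvd_inr_smul c n
    rw [Algebra.smul_def, hc, inv_div, div_mul_cancel₀ _ hn]

theorem dvd_or_dvd_of_fst_dvd {x y : TrivSqZeroExt R K} (h : x.fst ∣ y.fst) : x ∣ y ∨ y ∣ x := by
  by_cases hx : x.fst = 0
  · have hy : y.fst = 0 := zero_dvd_iff.mp (hx ▸ h)
    rw [← inl_fst_add_inr_snd_eq x, ← inl_fst_add_inr_snd_eq y, hx, hy, inl_zero, zero_add,
      zero_add]
    exact inr_dvd_or_dvd_inr _ _
  · exact Or.inl (dvd_of_fst_dvd hx h)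

instance preValuationRing : PreValuationRing (TrivSqZeroExt R K) :=
  PreValuationRing.iff_dvd_total.mpr ⟨fun x y =>
    (ValuationRing.dvd_total x.fst y.fst).elim dvd_or_dvd_of_fst_dvd
      fun h => (dvd_or_dvd_of_fst_dvd h).symm⟩

end TrivSqZeroExt

/-- The trivial ring extension `ℤ_p ⋉ ℚ_p` of the `p`-adic integers by the `p`-adic
numbers is a valuation ring. -/
theorem stmt7 (p : ℕ) [Fact p.Prime] :
    ∀ r s : TrivSqZeroExt ℤ_[p] ℚ_[p], r ∣ s ∨ s ∣ r := by
  exact ValuationRing.dvd_total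
end

section
/- Let A be a valuation domain which is a non-torsion setting: if R = A ⋉ E is a valuation ring with E nonzero and E non-torsion, then E is a torsion-free A-module. -/
/-! Compare `inr u` with `inr x` in the valuation ring `A ⋉ E`. If `inr x ∣ inr u`, then
`u = b • x`, so `a • x = 0` forces `a • u = 0` and `a = 0`. If `inr u ∣ inr x`, then
`x = b • u` and `a * b = 0`; comparing `inl a` with `inr u` now either gives `a = 0` (the first
component of a multiple of `inr u` vanishes) or `u = a • e`, whence `x = (a * b) • e = 0`. -/

universe u

namespace TrivSqZeroExt

section

variable {R M : Type*} [Semiring R] [AddCommMonoid M] [Module R M] [Module Rᵐᵒᵖ M]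
  [SMulCommClass R Rᵐᵒᵖ M]

theorem fst_eq_zero_of_inr_dvd {m : M} {r : TrivSqZeroExt R M} (h : inr m ∣ r) : r.fst = 0 := by
  obtain ⟨s, rfl⟩ := h
  simp only [fst_mul, fst_inr, zero_mul]

theorem exists_smul_eq_of_inl_dvd_inr {a : R} {m : M}
    (h : (inl a : TrivSqZeroExt R M) ∣ inr m) :
    ∃ n : M, m = a • n := by
  obtain ⟨s, hs⟩ := h
  refine ⟨s.snd, ?_⟩
  simpa only [snd_inr, snd_mul, fst_inl, snd_inl, smul_zero, add_zero] using congrArg snd hs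

end

theorem exists_smul_eq_of_inr_dvd_inr {R M : Type*} [CommSemiring R] [AddCommMonoid M]
    [Module R M] [Module Rᵐᵒᵖ M] [IsCentralScalar R M] {m n : M}
    (h : (inr m : TrivSqZeroExt R M) ∣ inr n) :
    ∃ b : R, n = b • m := by
  obtain ⟨s, hs⟩ := h
  refine ⟨s.fst, ?_⟩
  simpa only [snd_inr, snd_mul, fst_inr, zero_smul, zero_add, op_smul_eq_smul]
    using congrArg snd hs

end TrivSqZeroExt

open TrivSqZeroExt

theorem stmt9_general (A : Type u) [CommRing A] (E : Type u) [AddCommGroup E] [Module A E]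
    [Module Aᵐᵒᵖ E] [IsCentralScalar A E]
    (hnt : ∃ u : E, ∀ a : A, a • u = 0 → a = 0)
    (hval : ∀ r s : TrivSqZeroExt A E, r ∣ s ∨ s ∣ r) :
    ∀ x : E, x ≠ 0 → ∀ a : A, a • x = 0 → a = 0 := by
  obtain ⟨u, hu⟩ := hnt
  intro x hx a hax
  rcases hval (inr u) (inr x) with hux | hxu
  · obtain ⟨b, rfl⟩ := exists_smul_eq_of_inr_dvd_inr hux
    have hab : a * b = 0 := hu _ (by rwa [mul_smul])
    rcases hval (inl a) (inr u) with hau | hua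
    · obtain ⟨e, rfl⟩ := exists_smul_eq_of_inl_dvd_inr hau
      exact absurd (by rw [smul_smul, mul_comm, hab, zero_smul]) hx
    · simpa only [fst_inl] using fst_eq_zero_of_inr_dvd hua
  · obtain ⟨b, rfl⟩ := exists_smul_eq_of_inr_dvd_inr hxu
    exact hu a (by rw [smul_comm, hax, smul_zero])

/-- If the trivial ring extension `R = A ⋉ E` is a valuation ring, where `E` is a
nonzero non-torsion `A`-module, then `E` is torsion-free. -/
theorem stmt9 (A : Type u) [CommRing A] (E : Type u) [AddCommGroup E] [Module A E]
    [Module Aᵐᵒᵖ E] [IsCentralScalar A E] [Nontrivial E]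
    (hnt : ∃ u : E, ∀ a : A, a • u = 0 → a = 0)
    (hval : ∀ r s : TrivSqZeroExt A E, r ∣ s ∨ s ∣ r) :
    ∀ x : E, x ≠ 0 → ∀ a : A, a • x = 0 → a = 0 :=
  stmt9_general A E hnt hval
end

section
/- Let A be a coherent valuation ring with zero divisors (i.e., A is not a domain). Then A is not a (2,d)-ring for any nonnegative integer d. -/
universe u

/-- An `A`-module `M` is `n`-presented if it admits an exact sequence
`F_n → ⋯ → F_0 → M → 0` of finite free modules; equivalently (as defined here
recursively) it is finitely generated for `n = 0`, and for `n+1` there is a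
surjection from a finite free module whose kernel is `n`-presented. -/
def IsNPresented (A : Type u) [CommRing A] : ℕ → ∀ (M : Type u) [AddCommGroup M] [Module A M], Prop
  | 0, M, _, _ => Module.Finite A M
  | n + 1, M, _, _ => ∃ (k : ℕ) (f : (Fin k → A) →ₗ[A] M),
      Function.Surjective f ∧ IsNPresented A n (LinearMap.ker f)

/-- `ProjDimLE A d M` means the projective dimension of `M` over `A` is at most `d`:
`M` is projective for `d = 0`, and for `d+1` there is a surjection from a free
module whose kernel has projective dimension at most `d`. -/
def ProjDimLE (A : Type u) [CommRing A] : ℕ → ∀ (M : Type u) [AddCommGroup M] [Module A M], Prop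
  | 0, M, _, _ => Module.Projective A M
  | d + 1, M, _, _ => ∃ (ι : Type u) (f : (ι →₀ A) →ₗ[A] M),
      Function.Surjective f ∧ ProjDimLE A d (LinearMap.ker f)


/-!
If `x` is a nonzero zero divisor of a coherent valuation ring `A`, its annihilator is finitely
generated, hence principal, say `(0 : x) = (y)`, and `y` is again a nonzero zero divisor. Iterating
gives `c₀, c₁, …` with `(0 : cₙ) = (cₙ₊₁)`, so the syzygy `(cₙ)` of `A/(cₙ)` is `A/(cₙ₊₁)`. In
particular `A/(c₀)` is 2-presented. By Schanuel's lemma, `pd A/(cₙ) ≤ d + 1` forces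
`pd A/(cₙ₊₁) ≤ d` up to free summands, so some `A/(cₙ)` would be projective; this is impossible
over a local ring, as `cₙ` is neither zero nor a unit.
-/

open Function LinearMap Submodule

variable {A : Type u} [CommRing A]

section Kernels

variable {M N P : Type u} [AddCommGroup M] [Module A M] [AddCommGroup N] [Module A N]
  [AddCommGroup P] [Module A P]

noncomputable def LinearMap.kerCompEquiv (f : N →ₗ[A] M) (e : P ≃ₗ[A] N) :
    ker (f ∘ₗ e.toLinearMap) ≃ₗ[A] ker f :=
  e.ofSubmodules _ _ (by rw [ker_comp, map_comap_eq_of_surjective e.surjective])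

noncomputable def LinearMap.kerProdMapIdEquiv (f : N →ₗ[A] M) :
    ker (f.prodMap (LinearMap.id : P →ₗ[A] P)) ≃ₗ[A] ker f :=
  (LinearEquiv.ofEq _ _ (by rw [ker_prodMap, ker_id, map_inl])).trans
    ((ker f).equivMapOfInjective _ (inl_injective (R := A) (M := N) (M₂ := P))).symm

theorem Function.Exact.nonempty_linearEquiv_prod [Module.Projective A P] {i : M →ₗ[A] N}
    {π : N →ₗ[A] P} (h : Exact i π) (hi : Injective i) (hπ : Surjective π) :
    Nonempty (N ≃ₗ[A] M × P) :=
  let ⟨l, hl⟩ := Module.projective_lifting_property π LinearMap.id hπ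
  ⟨(h.splitSurjectiveEquiv hi ⟨l, hl⟩).1⟩

end Kernels

section Schanuel

variable {M P Q : Type u} [AddCommGroup M] [Module A M] [AddCommGroup P] [Module A P]
  [AddCommGroup Q] [Module A Q] [Module.Projective A P] [Module.Projective A Q]

theorem schanuel {f : P →ₗ[A] M} {g : Q →ₗ[A] M} (hf : Surjective f) (hg : Surjective g) :
    Nonempty ((ker f × Q) ≃ₗ[A] (ker g × P)) := by
  -- both sides are splittings of the pullback `X = P ×_M Q`
  let X := ker (f ∘ₗ fst A P Q - g ∘ₗ snd A P Q)
  have mem_X {x : P × Q} : x ∈ X ↔ f x.1 = g x.2 := by simp [X, sub_eq_zero]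
  let iQ : ker g →ₗ[A] X := codRestrict X (inr A P Q ∘ₗ (ker g).subtype) fun q ↦ by simp [mem_X]
  let iP : ker f →ₗ[A] X := codRestrict X (inl A P Q ∘ₗ (ker f).subtype) fun p ↦ by simp [mem_X]
  have exact_P : Exact iQ (fst A P Q ∘ₗ X.subtype) := by
    rintro ⟨⟨p, q⟩, hx⟩
    refine ⟨fun (hp : p = 0) ↦ ⟨⟨q, ?_⟩, by subst hp; rfl⟩,
      fun ⟨_, hk⟩ ↦ congrArg (fun x : X ↦ (x : P × Q).1) hk.symm⟩
    simpa [hp] using (mem_X.mp hx).symm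
  have exact_Q : Exact iP (snd A P Q ∘ₗ X.subtype) := by
    rintro ⟨⟨p, q⟩, hx⟩
    refine ⟨fun (hq : q = 0) ↦ ⟨⟨p, ?_⟩, by subst hq; rfl⟩,
      fun ⟨_, hk⟩ ↦ congrArg (fun x : X ↦ (x : P × Q).2) hk.symm⟩
    simpa [hq] using mem_X.mp hx
  obtain ⟨eP⟩ := exact_P.nonempty_linearEquiv_prod
    (fun _ _ h ↦ Subtype.ext (congrArg (fun x : X ↦ (x : P × Q).2) h))
    fun p ↦ let ⟨q, hq⟩ := hg (f p); ⟨⟨(p, q), mem_X.mpr hq.symm⟩, rfl⟩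
  obtain ⟨eQ⟩ := exact_Q.nonempty_linearEquiv_prod
    (fun _ _ h ↦ Subtype.ext (congrArg (fun x : X ↦ (x : P × Q).1) h))
    fun q ↦ let ⟨p, hp⟩ := hf (g q); ⟨⟨(p, q), mem_X.mpr hp⟩, rfl⟩
  exact ⟨eQ.symm.trans eP⟩

end Schanuel

namespace ProjDimLE

variable {M N P : Type u} [AddCommGroup M] [Module A M] [AddCommGroup N] [Module A N]
  [AddCommGroup P] [Module A P]

theorem of_linearEquiv : ∀ {d : ℕ}, (M ≃ₗ[A] N) → ProjDimLE A d M → ProjDimLE A d N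
  | 0, e, h => (h : Module.Projective A M).of_equiv e
  | _ + 1, e, ⟨ι, f, hf, hker⟩ =>
    ⟨ι, e.toLinearMap ∘ₗ f, e.surjective.comp hf, by rwa [LinearEquiv.ker_comp]⟩

theorem succ_of_free [Module.Free A P] {d : ℕ} (f : P →ₗ[A] M) (hf : Surjective f)
    (h : ProjDimLE A d (ker f)) : ProjDimLE A (d + 1) M :=
  let e := (Module.Free.chooseBasis A P).repr.symm
  ⟨_, f ∘ₗ e.toLinearMap, hf.comp e.surjective, of_linearEquiv (f.kerCompEquiv e).symm h⟩

theorem prod_free [Module.Free A P] : ∀ {d : ℕ}, ProjDimLE A d M → ProjDimLE A d (M × P)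
  | 0, h => have : Module.Projective A M := h; inferInstanceAs (Module.Projective A (M × P))
  | _ + 1, ⟨_, f, hf, hker⟩ => succ_of_free (f.prodMap LinearMap.id) (hf.prodMap surjective_id)
      (of_linearEquiv f.kerProdMapIdEquiv.symm hker)

theorem exists_ker_prod_of_succ [Module.Free A P] {d : ℕ} {g : P →ₗ[A] M} (hg : Surjective g)
    (h : ProjDimLE A (d + 1) M) : ∃ ι : Type u, ProjDimLE A d (ker g × (ι →₀ A)) := by
  obtain ⟨ι, f, hf, hker⟩ := h
  obtain ⟨e⟩ := schanuel hf hg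
  exact ⟨ι, (hker.prod_free (P := P)).of_linearEquiv e⟩

end ProjDimLE

noncomputable def Ideal.spanSingletonEquivQuotient {x y : A}
    (hxy : Ideal.torsionOf A A x = Ideal.span {y}) :
    Ideal.span {x} ≃ₗ[A] A ⧸ Ideal.span {y} :=
  (Ideal.quotTorsionOfEquivSpanSingleton A A x).symm.trans (Submodule.quotEquivOfEq _ _ hxy)

namespace IsNPresented

variable {M N : Type u} [AddCommGroup M] [Module A M] [AddCommGroup N] [Module A N]

theorem of_linearEquiv : ∀ {n : ℕ}, (M ≃ₗ[A] N) → IsNPresented A n M → IsNPresented A n N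
  | 0, e, h => have : Module.Finite A M := h; Module.Finite.equiv e
  | _ + 1, e, ⟨k, f, hf, hker⟩ =>
    ⟨k, e.toLinearMap ∘ₗ f, e.surjective.comp hf, by rwa [LinearEquiv.ker_comp]⟩

theorem quotient_succ {n : ℕ} {I : Ideal A} (h : IsNPresented A n I) :
    IsNPresented A (n + 1) (A ⧸ I) :=
  let e := LinearEquiv.funUnique (Fin 1) A A
  ⟨1, I.mkQ ∘ₗ e.toLinearMap, I.mkQ_surjective.comp e.surjective,
    of_linearEquiv ((I.mkQ.kerCompEquiv e).trans (LinearEquiv.ofEq _ _ (ker_mkQ I))).symm h⟩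

theorem two_quotient_span_singleton {x y : A} (hxy : Ideal.torsionOf A A x = Ideal.span {y}) :
    IsNPresented A 2 (A ⧸ Ideal.span {x}) :=
  have : IsNPresented A 0 (Ideal.span {y}) := Module.Finite.iff_fg.mpr (fg_span_singleton y)
  quotient_succ (of_linearEquiv (Ideal.spanSingletonEquivQuotient hxy).symm (quotient_succ this))

end IsNPresented

theorem PreValuationRing.isPrincipal_of_fg [PreValuationRing A] {I : Ideal A} (hI : I.FG) :
    I.IsPrincipal := by
  induction I, hI using Submodule.fg_induction with
  | singleton x => exact ⟨x, rfl⟩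
  | sup I J _ _ hI hJ =>
    rcases total_of (· ≤ ·) I J with hIJ | hJI
    · rwa [sup_eq_right.mpr hIJ]
    · rwa [sup_eq_left.mpr hJI]

theorem Ideal.fg_torsionOf_of_finitePresentation (x : A)
    [Module.FinitePresentation A (Ideal.span {x})] : (Ideal.torsionOf A A x).FG := by
  have := Module.FinitePresentation.of_equiv (Ideal.quotTorsionOfEquivSpanSingleton A A x).symm
  have hker := Module.FinitePresentation.fg_ker _ (Ideal.torsionOf A A x).mkQ_surjective
  rw [ker_mkQ] at hker
  exact hker

theorem exists_torsionOf_chain [PreValuationRing A]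
    (hcoh : ∀ I : Ideal A, I.FG → Module.FinitePresentation A I)
    {a b : A} (ha : a ≠ 0) (hb : b ≠ 0) (hab : a * b = 0) :
    ∃ c : ℕ → A, ∀ n, c n ≠ 0 ∧ Ideal.torsionOf A A (c n) = Ideal.span {c (n + 1)} := by
  let ZeroDivisor := {x : A // x ≠ 0 ∧ ∃ z ≠ 0, x * z = 0}
  have step (x : ZeroDivisor) : ∃ y : ZeroDivisor, Ideal.torsionOf A A x = Ideal.span {y.1} := by
    obtain ⟨x, hx, z, hz, hxz⟩ := x
    have := hcoh _ (fg_span_singleton x)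
    obtain ⟨y, hy⟩ :=
      (PreValuationRing.isPrincipal_of_fg (Ideal.fg_torsionOf_of_finitePresentation x)).principal
    have hz_mem : z ∈ Ideal.torsionOf A A x := by
      rw [Ideal.mem_torsionOf_iff, smul_eq_mul, mul_comm, hxz]
    have hy_mem : y ∈ Ideal.torsionOf A A x := hy ▸ mem_span_singleton_self y
    refine ⟨⟨y, ?_, x, hx, (Ideal.mem_torsionOf_iff x y).mp hy_mem⟩, hy⟩
    rintro rfl
    rw [hy] at hz_mem
    exact hz (by simpa using hz_mem)
  choose next hnext using step
  let c (n : ℕ) : ZeroDivisor := next^[n] ⟨a, ha, b, hb, hab⟩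
  exact ⟨fun n ↦ c n, fun n ↦ ⟨(c n).2.1, by simp only [c, iterate_succ_apply', hnext]⟩⟩

theorem not_projective_quotient_span_singleton [IsLocalRing A] {x : A} (hx : x ≠ 0)
    (hxu : ¬IsUnit x) : ¬Module.Projective A (A ⧸ Ideal.span {x}) := by
  intro hP
  obtain ⟨s, hs⟩ := Module.projective_lifting_property (Ideal.span {x}).mkQ LinearMap.id
    (Ideal.span {x}).mkQ_surjective
  -- a lift `e` of `1` is killed by `x`, yet `e ≡ 1 mod x` is a unit since `A` is local
  set e := s (Submodule.Quotient.mk 1)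
  have hxe : x * e = 0 := by
    rw [← smul_eq_mul, ← map_smul, ← Submodule.Quotient.mk_smul, smul_eq_mul, mul_one,
      (Submodule.Quotient.mk_eq_zero _).mpr (Ideal.mem_span_singleton_self x), map_zero]
  have h1e : 1 - e ∈ Ideal.span {x} := by
    rw [← Submodule.Quotient.eq]
    exact (LinearMap.congr_fun hs _).symm
  obtain ⟨r, hr⟩ := Ideal.mem_span_singleton'.mp h1e
  have he : IsUnit e := by
    rw [show e = 1 - r * x by rw [hr]; ring]
    exact IsLocalRing.isUnit_one_sub_self_of_mem_nonunits _
      fun hrx ↦ hxu (isUnit_of_mul_isUnit_right hrx)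
  exact hx (he.mul_left_eq_zero.mp hxe)

theorem not_projDimLE_quotient_prod [IsLocalRing A] {c : ℕ → A}
    (hc : ∀ n, c n ≠ 0 ∧ Ideal.torsionOf A A (c n) = Ideal.span {c (n + 1)}) (d n : ℕ)
    (σ : Type u) : ¬ProjDimLE A d ((A ⧸ Ideal.span {c n}) × (σ →₀ A)) := by
  induction d generalizing n σ with
  | zero =>
    intro h
    have : Module.Projective A _ := h
    have hc_mul : c (n + 1) * c n = 0 :=
      (Ideal.mem_torsionOf_iff _ _).mp ((hc n).2 ▸ Ideal.mem_span_singleton_self _)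
    exact not_projective_quotient_span_singleton (hc n).1
      (fun hu ↦ (hc (n + 1)).1 (hu.mul_left_eq_zero.mp hc_mul))
      (.of_split (inl A _ (σ →₀ A)) (fst A _ (σ →₀ A)) (by ext; rfl))
  | succ d ih =>
    intro h
    let g := (Ideal.span {c n}).mkQ.prodMap (LinearMap.id : (σ →₀ A) →ₗ[A] σ →₀ A)
    obtain ⟨ι, hι⟩ := h.exists_ker_prod_of_succ (g := g)
      ((Ideal.span {c n}).mkQ_surjective.prodMap surjective_id)
    let e : ker g ≃ₗ[A] A ⧸ Ideal.span {c (n + 1)} :=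
      (Ideal.span {c n}).mkQ.kerProdMapIdEquiv.trans <| (LinearEquiv.ofEq _ _ (ker_mkQ _)).trans <|
        Ideal.spanSingletonEquivQuotient (hc n).2
    exact ih (n + 1) ι (hι.of_linearEquiv (e.prodCongr (LinearEquiv.refl _ _)))

/-- A coherent valuation ring with zero divisors is not a `(2,d)`-ring for any `d`. -/
theorem stmt15 (A : Type u) [CommRing A]
    (hval : ∀ a b : A, a ∣ b ∨ b ∣ a)
    (hzd : ∃ a b : A, a ≠ 0 ∧ b ≠ 0 ∧ a * b = 0)
    (hcoh : ∀ I : Ideal A, I.FG → Module.FinitePresentation A I) :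
    ∀ d : ℕ, ¬ ∀ (M : Type u) [AddCommGroup M] [Module A M],
      IsNPresented A 2 M → ProjDimLE A d M := by
  intro d H
  obtain ⟨a, b, ha, hb, hab⟩ := hzd
  have : PreValuationRing A := PreValuationRing.iff_dvd_total.mpr ⟨hval⟩
  have : Nontrivial A := nontrivial_of_ne a 0 ha
  obtain ⟨c, hc⟩ := exists_torsionOf_chain hcoh ha hb hab
  have hpd := H _ (IsNPresented.two_quotient_span_singleton (hc 0).2)
  exact not_projDimLE_quotient_prod hc d 0 PEmpty (hpd.prod_free (P := PEmpty →₀ A))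
end

section
/- Let K be a field and n ≥ 2 an integer, and let A = K[x]/(x^n). Then A is a valuation ring, the annihilator of x^{n-1} in A is the principal ideal generated by x, and A is not a (2,d)-ring for any nonnegative integer d. -/
universe u

/-! In `A = K[X]/(X^n)` every element is a power of `x` times a unit, and `x^j r = 0` exactly when
`x^(n-j) ∣ r`. So `(x, x^(n-1))` is an exact pair of zero divisors: the periodic complex
`⋯ → A --x^(n-1)→ A --x→ A --x^(n-1)→ ⋯` is exact, hence stays exact after tensoring with a flat
(e.g. projective) module. For `M = A/(x)` it is not exact at `1`, and such a defect passes from a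
module to the kernel of any free cover, with the roles of `x` and `x^(n-1)` swapped. So no syzygy of
`A/(x)` is projective, while `A/(x)` is 2-presented because `A` is Noetherian. -/

open Polynomial LinearMap

section ExactPair

variable {A : Type u} [CommRing A] {a b : A}

theorem Module.Flat.exact_lsmul_of_exact {M : Type*} [AddCommGroup M] [Module A M]
    [Module.Flat A M] (h : Function.Exact (lsmul A A a) (lsmul A A b)) :
    Function.Exact (lsmul A M a) (lsmul A M b) := by
  refine (Function.Exact.iff_of_ladder_linearEquiv (e₁ := TensorProduct.lid A M)
    (e₂ := TensorProduct.lid A M) (e₃ := TensorProduct.lid A M) ?_ ?_).mpr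
    (Module.Flat.rTensor_exact M h)
  all_goals ext; simp

theorem exists_mem_ker_smul_eq_zero_notMem_range {F M : Type*} [AddCommGroup F] [Module A F]
    [AddCommGroup M] [Module A M] (hF : Function.Exact (lsmul A F b) (lsmul A F a))
    (hab : a * b = 0) {f : F →ₗ[A] M} (hf : Function.Surjective f) {m : M} (hm : a • m = 0)
    (hmb : m ∉ range (lsmul A M b)) :
    ∃ k : ker f, b • k = 0 ∧ k ∉ range (lsmul A (ker f) a) := by
  obtain ⟨v, rfl⟩ := hf m
  refine ⟨⟨a • v, by simpa using hm⟩, Subtype.ext (by simp [smul_smul, mul_comm b, hab]), ?_⟩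
  rintro ⟨⟨w, hw⟩, hwv⟩
  have hvw : a • (v - w) = 0 := by
    simpa [smul_sub, sub_eq_zero, eq_comm] using congrArg Subtype.val hwv
  obtain ⟨u, hu⟩ := (hF (v - w)).mp hvw
  refine hmb ⟨f u, ?_⟩
  simp only [lsmul_apply] at hu ⊢
  rw [← map_smul, hu, map_sub, mem_ker.mp hw, sub_zero]

theorem one_notMem_range_lsmul_quotient (ha : ¬IsUnit a) (hab : a ∣ b) :
    (1 : A ⧸ Ideal.span {a}) ∉ range (lsmul A (A ⧸ Ideal.span {a}) b) := by
  rintro ⟨u, hu⟩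
  obtain ⟨r, rfl⟩ := Ideal.Quotient.mk_surjective u
  have hb : b * r ∈ Ideal.span {a} := Ideal.mul_mem_right r _ (Ideal.mem_span_singleton.mpr hab)
  rw [lsmul_apply, Algebra.smul_def, Ideal.Quotient.algebraMap_eq, ← map_mul,
    Ideal.Quotient.eq_zero_iff_mem.mpr hb, Ideal.Quotient.zero_eq_one_iff,
    Ideal.span_singleton_eq_top] at hu
  exact ha hu

theorem not_projDimLE_of_notMem_range_lsmul
    (hab : Function.Exact (lsmul A A b) (lsmul A A a))
    (hba : Function.Exact (lsmul A A a) (lsmul A A b)) (d : ℕ) {M : Type u} [AddCommGroup M]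
    [Module A M] {m : M} (hm : a • m = 0) (hmb : m ∉ range (lsmul A M b)) :
    ¬ ProjDimLE A d M := by
  induction d generalizing a b M with
  | zero =>
    intro (hM : Module.Projective A M)
    exact hmb ((Module.Flat.exact_lsmul_of_exact hab m).mp hm)
  | succ d ih =>
    rintro ⟨ι, f, hf, hker⟩
    obtain ⟨k, hk, hka⟩ := exists_mem_ker_smul_eq_zero_notMem_range
      (Module.Flat.exact_lsmul_of_exact hab) (by simpa using hab.apply_apply_eq_zero 1) hf hm hmb
    exact ih (M := ker f) hba hab hk hka hker

theorem not_projDimLE_quotient_span_singleton (hab : Function.Exact (lsmul A A b) (lsmul A A a))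
    (hba : Function.Exact (lsmul A A a) (lsmul A A b)) (ha : ¬IsUnit a) (hdvd : a ∣ b) (d : ℕ) :
    ¬ProjDimLE A d (A ⧸ Ideal.span {a}) :=
  not_projDimLE_of_notMem_range_lsmul hab hba d
    (by rw [Algebra.smul_def, mul_one, Ideal.Quotient.algebraMap_eq,
      Ideal.Quotient.mk_singleton_self])
    (one_notMem_range_lsmul_quotient ha hdvd)

end ExactPair

theorem dvd_or_dvd_of_forall_eq_pow_mul_unit {M : Type*} [CommMonoid M] (x : M)
    (h : ∀ r : M, ∃ (i : ℕ) (u : Mˣ), r = x ^ i * u) (a b : M) : a ∣ b ∨ b ∣ a := by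
  obtain ⟨i, u, rfl⟩ := h a
  obtain ⟨j, v, rfl⟩ := h b
  simp only [Units.mul_right_dvd, Units.dvd_mul_right]
  exact (le_total i j).imp (pow_dvd_pow x) (pow_dvd_pow x)

theorem isNPresented_of_finite (A : Type u) [CommRing A] [IsNoetherianRing A] (k : ℕ)
    (M : Type u) [AddCommGroup M] [Module A M] [Module.Finite A M] : IsNPresented A k M := by
  induction k generalizing M with
  | zero => assumption
  | succ k ih =>
    obtain ⟨r, f, hf⟩ := Module.Finite.exists_fin' A M
    exact ⟨r, f, hf, ih _⟩

abbrev TruncatedPolynomial (K : Type*) [Field K] (n : ℕ) : Type _ :=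
  K[X] ⧸ Ideal.span {(X : K[X]) ^ n}

namespace TruncatedPolynomial

variable {K : Type u} [Field K] {n : ℕ}

noncomputable abbrev x : TruncatedPolynomial K n := Ideal.Quotient.mk _ X

theorem x_pow_eq_zero_iff {j : ℕ} : (x : TruncatedPolynomial K n) ^ j = 0 ↔ n ≤ j := by
  rw [← map_pow, Ideal.Quotient.eq_zero_iff_mem, Ideal.mem_span_singleton,
    pow_dvd_pow_iff X_ne_zero not_isUnit_X]

theorem x_pow_mul_eq_zero_iff {i j : ℕ} (hij : i + j = n) (r : TruncatedPolynomial K n) :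
    x ^ j * r = 0 ↔ x ^ i ∣ r := by
  constructor
  · intro h
    obtain ⟨p, rfl⟩ := Ideal.Quotient.mk_surjective r
    have hp : X ^ j * X ^ i ∣ X ^ j * p := by
      rw [← pow_add, add_comm, hij, ← Ideal.mem_span_singleton, ← Ideal.Quotient.eq_zero_iff_mem,
        map_mul, map_pow]
      exact h
    rw [← map_pow]
    exact map_dvd _ ((mul_dvd_mul_iff_left (pow_ne_zero _ X_ne_zero)).mp hp)
  · rintro ⟨c, rfl⟩
    rw [← mul_assoc, ← pow_add, add_comm, hij, x_pow_eq_zero_iff.mpr le_rfl, zero_mul]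

theorem exact_lsmul_x_pow {i j : ℕ} (hij : i + j = n) :
    Function.Exact (lsmul (TruncatedPolynomial K n) (TruncatedPolynomial K n) (x ^ i))
      (lsmul (TruncatedPolynomial K n) (TruncatedPolynomial K n) (x ^ j)) := by
  intro r
  simp only [lsmul_apply, smul_eq_mul, x_pow_mul_eq_zero_iff hij, Set.mem_range, dvd_def, eq_comm]

theorem ker_toSpanSingleton_x_pow {i j : ℕ} (hij : i + j = n) :
    ker (toSpanSingleton (TruncatedPolynomial K n) (TruncatedPolynomial K n) (x ^ j)) =
      Ideal.span {x ^ i} := by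
  ext r
  rw [mem_ker, toSpanSingleton_apply, smul_eq_mul, mul_comm, x_pow_mul_eq_zero_iff hij,
    Ideal.mem_span_singleton]

theorem exists_eq_x_pow_mul_unit (r : TruncatedPolynomial K n) :
    ∃ (i : ℕ) (u : (TruncatedPolynomial K n)ˣ), r = x ^ i * (u : TruncatedPolynomial K n) := by
  obtain ⟨p, rfl⟩ := Ideal.Quotient.mk_surjective r
  rcases eq_or_ne p 0 with rfl | hp
  · exact ⟨n, 1, by rw [x_pow_eq_zero_iff.mpr le_rfl, zero_mul, map_zero]⟩
  obtain ⟨q, hpq, hq⟩ := p.exists_eq_pow_rootMultiplicity_mul_and_not_dvd hp 0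
  rw [map_zero, sub_zero] at hpq hq
  obtain ⟨s, t, hst⟩ := ((prime_X.coprime_iff_not_dvd).mpr hq).pow_left (m := n)
  have hunit : Ideal.Quotient.mk (Ideal.span {(X : K[X]) ^ n}) q * Ideal.Quotient.mk _ t = 1 := by
    have hs : Ideal.Quotient.mk (Ideal.span {(X : K[X]) ^ n}) (s * X ^ n) = 0 :=
      Ideal.Quotient.eq_zero_iff_mem.mpr (Ideal.mul_mem_left _ s (Ideal.mem_span_singleton_self _))
    rw [← map_mul, mul_comm, ← map_one (Ideal.Quotient.mk _), ← hst, map_add, hs, zero_add]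
  exact ⟨_, Units.mkOfMulEqOne _ _ hunit, by rw [hpq, map_mul, map_pow]; rfl⟩

theorem not_isUnit_x (hn : n ≠ 0) : ¬IsUnit (x : TruncatedPolynomial K n) := by
  intro hx
  have : IsUnit ((x : TruncatedPolynomial K n) ^ n) := hx.pow n
  rw [x_pow_eq_zero_iff.mpr le_rfl, isUnit_zero_iff, eq_comm, ← pow_zero x,
    x_pow_eq_zero_iff] at this
  omega

theorem not_projDimLE_quotient_span_x (hn : 2 ≤ n) (d : ℕ) :
    ¬ProjDimLE (TruncatedPolynomial K n) d (TruncatedPolynomial K n ⧸ Ideal.span {x}) := by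
  have hx := exact_lsmul_x_pow (K := K) (n := n) (i := n - 1) (j := 1) (by omega)
  have hx' := exact_lsmul_x_pow (K := K) (n := n) (i := 1) (j := n - 1) (by omega)
  rw [pow_one] at hx hx'
  exact not_projDimLE_quotient_span_singleton hx hx' (not_isUnit_x (by omega))
    (dvd_pow_self _ (by omega)) d

end TruncatedPolynomial

open Polynomial in
set_option synthInstance.maxHeartbeats 1000000 in
/-- For a field `K` and `n ≥ 2`, `A = K[x]/(x^n)` is a valuation ring, the
annihilator of `x^(n-1)` in `A` is the principal ideal generated by `x`, and `A` is
not a `(2,d)`-ring for any `d`. -/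
theorem stmt17 (K : Type u) [Field K] (n : ℕ) (hn : 2 ≤ n) :
    (∀ a b : K[X] ⧸ Ideal.span {(X : K[X]) ^ n}, a ∣ b ∨ b ∣ a) ∧
      (LinearMap.ker (LinearMap.toSpanSingleton
          (K[X] ⧸ Ideal.span {(X : K[X]) ^ n}) (K[X] ⧸ Ideal.span {(X : K[X]) ^ n})
          (Ideal.Quotient.mk (Ideal.span {(X : K[X]) ^ n}) (X ^ (n - 1)))) =
        Ideal.span {Ideal.Quotient.mk (Ideal.span {(X : K[X]) ^ n}) X}) ∧
      ∀ d : ℕ, ¬ ∀ (M : Type u) [AddCommGroup M]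
          [Module (K[X] ⧸ Ideal.span {(X : K[X]) ^ n}) M],
        IsNPresented (K[X] ⧸ Ideal.span {(X : K[X]) ^ n}) 2 M →
          ProjDimLE (K[X] ⧸ Ideal.span {(X : K[X]) ^ n}) d M := by
  refine ⟨dvd_or_dvd_of_forall_eq_pow_mul_unit _ TruncatedPolynomial.exists_eq_x_pow_mul_unit,
    ?_, fun d h => TruncatedPolynomial.not_projDimLE_quotient_span_x hn d
      (h _ (isNPresented_of_finite _ 2 _))⟩
  simpa only [map_pow, pow_one] using
    TruncatedPolynomial.ker_toSpanSingleton_x_pow (K := K) (i := 1) (j := n - 1) (by omega)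
end

section
/- Let A be an arithmetical ring such that for every maximal ideal m of A and every nonzero zero-divisor x of the localization A_m, the annihilator (0:x) in A_m is not finitely generated. Then every 3-presented A-module has projective dimension at most 1 (A is a (3,1)-ring). -/
/-!
If `0 → K → A^k → M → 0` with `K` finitely presented, it suffices that `K` is projective, i.e.
that every `K_m` is free. Over the chain ring `A_m`, a finitely presented submodule `N` of a
finite free module is free: choose a generator `v` with an entry `c` dividing all entries of all
generators, and clear the column of `c`, so that `N` is the image of `A_m × C`,
`(a, y) ↦ a • v + y`, with `C` spanned by fewer generators. The kernel of this map projects onto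
`ann c`, which is therefore finitely generated; by hypothesis `c` is then regular, `N ≅ A_m × C`,
and induction on the number of generators applies to `C`.
-/

universe u

open Submodule LinearMap

theorem PreValuationRing.exists_dvd_forall {R α : Type*} [CommMonoid R] [PreValuationRing R]
    [Finite α] [Nonempty α] (f : α → R) : ∃ a, ∀ b, f a ∣ f b := by
  cases nonempty_fintype α
  suffices ∀ s : Finset α, s.Nonempty → ∃ a ∈ s, ∀ b ∈ s, f a ∣ f b by
    obtain ⟨a, -, ha⟩ := this Finset.univ Finset.univ_nonempty
    exact ⟨a, fun b => ha b (Finset.mem_univ b)⟩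
  intro s hs
  induction hs using Finset.Nonempty.cons_induction with
  | singleton a => exact ⟨a, by simp⟩
  | cons a s ha hs ih =>
    obtain ⟨c, hc, hcs⟩ := ih
    rcases ValuationRing.dvd_total (f a) (f c) with h | h
    · exact ⟨a, Finset.mem_cons_self a s,
        (Finset.forall_mem_cons _ _).2 ⟨dvd_rfl, fun b hb => h.trans (hcs b hb)⟩⟩
    · exact ⟨c, Finset.mem_cons_of_mem hc, (Finset.forall_mem_cons _ _).2 ⟨h, hcs⟩⟩

section Splitting

variable {R F : Type*} [CommRing R] [AddCommGroup F] [Module R F]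

theorem exists_span_range_eq_sup_of_dvd (φ : F →ₗ[R] R) {m : ℕ} (g : Fin (m + 1) → F)
    (i₀ : Fin (m + 1)) (hdvd : ∀ i, φ (g i₀) ∣ φ (g i)) :
    ∃ g' : Fin m → F, (∀ i, φ (g' i) = 0) ∧
      span R (Set.range g) = (R ∙ g i₀) ⊔ span R (Set.range g') := by
  choose r hr using hdvd
  refine ⟨fun i => g (i₀.succAbove i) - r _ • g i₀, fun i => by
    rw [map_sub, map_smul, hr, smul_eq_mul, mul_comm, sub_self], ?_⟩
  have hv : ∀ i, r i • g i₀ ∈ (R ∙ g i₀) := fun i => smul_mem _ _ (mem_span_singleton_self _)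
  rw [← Set.insert_image_compl_eq_range g i₀, ← Fin.range_succAbove, ← Set.range_comp,
    span_insert]
  apply le_antisymm <;> refine sup_le le_sup_left (span_le.2 ?_) <;> rintro _ ⟨i, rfl⟩
  · rw [Function.comp_apply, ← sub_add_cancel (g (i₀.succAbove i)) (r (i₀.succAbove i) • g i₀)]
    exact add_mem (mem_sup_right (subset_span ⟨i, rfl⟩)) (mem_sup_left (hv _))
  · exact sub_mem (mem_sup_right (subset_span ⟨i, rfl⟩)) (mem_sup_left (hv _))

variable {φ : F →ₗ[R] R} {v : F} {C : Submodule R F}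

theorem mul_apply_eq_zero_of_mem_ker_coprod (hC : C ≤ ker φ) {p : R × C}
    (hp : p ∈ ker ((toSpanSingleton R F v).coprod C.subtype)) : p.1 * φ v = 0 := by
  have := congrArg φ (mem_ker.1 hp)
  simpa [mem_ker.1 (hC p.2.2)] using this

theorem map_fst_ker_coprod_toSpanSingleton (hC : C ≤ ker φ)
    (hv : ∀ a : R, a * φ v = 0 → a • v = 0) :
    (ker ((toSpanSingleton R F v).coprod C.subtype)).map (fst R R C) =
      ker (toSpanSingleton R R (φ v)) := by
  ext a
  constructor
  · rintro ⟨p, hp, rfl⟩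
    simpa using mul_apply_eq_zero_of_mem_ker_coprod hC hp
  · intro ha
    exact ⟨(a, 0), by simpa using hv a (by simpa using ha), rfl⟩

theorem injective_coprod_toSpanSingleton (hC : C ≤ ker φ)
    (hreg : ∀ a : R, a * φ v = 0 → a = 0) :
    Function.Injective ((toSpanSingleton R F v).coprod C.subtype) := by
  rw [← ker_eq_bot, eq_bot_iff]
  rintro ⟨a, y⟩ hp
  obtain rfl : a = 0 := hreg a (mul_apply_eq_zero_of_mem_ker_coprod hC hp)
  simpa using hp

end Splitting

section ChainRing

variable {R : Type*} [CommRing R]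
  (hann : ∀ x : R, x ≠ 0 → (∃ y : R, y ≠ 0 ∧ x * y = 0) →
    ¬ (ker (toSpanSingleton R R x)).FG)
include hann

theorem nonempty_linearEquiv_prod_of_finitePresentation {F : Type*} [AddCommGroup F]
    [Module R F] {φ : F →ₗ[R] R} {v : F} {C : Submodule R F} [Module.Finite R C]
    (hC : C ≤ ker φ) (hv : ∀ a : R, a * φ v = 0 → a • v = 0) (hφv : φ v ≠ 0)
    [Module.FinitePresentation R ((R ∙ v) ⊔ C : Submodule R F)] :
    Nonempty (((R ∙ v) ⊔ C : Submodule R F) ≃ₗ[R] R × C) := by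
  set Φ := (toSpanSingleton R F v).coprod C.subtype
  have hrange : range Φ = (R ∙ v) ⊔ C := by
    rw [range_coprod, range_subtype, LinearMap.span_singleton_eq_range]
  have hker : (ker Φ).FG := by
    have : Module.FinitePresentation R (range Φ) := hrange ▸ inferInstance
    rw [← ker_rangeRestrict]
    exact Module.FinitePresentation.fg_ker _ Φ.surjective_rangeRestrict
  have hreg : ∀ a : R, a * φ v = 0 → a = 0 := by
    by_contra! ⟨a, ha, ha0⟩
    exact hann _ hφv ⟨a, ha0, by rwa [mul_comm]⟩
      (map_fst_ker_coprod_toSpanSingleton hC hv ▸ hker.map (fst R R C))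
  exact ⟨((LinearEquiv.ofInjective Φ (injective_coprod_toSpanSingleton hC hreg)).trans
    (.ofEq _ _ hrange)).symm⟩

variable [PreValuationRing R]

theorem Module.free_span_range_of_finitePresentation {ι : Type*} [Finite ι] :
    ∀ {m : ℕ} (g : Fin m → ι → R), Module.FinitePresentation R (span R (Set.range g)) →
      Module.Free R (span R (Set.range g)) := by
  intro m
  induction m with
  | zero => intro g _; rw [Set.range_eq_empty, span_empty]; infer_instance
  | succ m ih =>
    intro g hfp
    cases isEmpty_or_nonempty ι
    · infer_instance
    obtain ⟨⟨i₀, j₀⟩, hmin⟩ :=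
      PreValuationRing.exists_dvd_forall fun p : Fin (m + 1) × ι => g p.1 p.2
    by_cases hc : g i₀ j₀ = 0
    · have : span R (Set.range g) = ⊥ := span_eq_bot.2 <| by
        rintro _ ⟨i, rfl⟩
        exact funext fun j => zero_dvd_iff.1 (hc ▸ hmin (i, j))
      rw [this]
      infer_instance
    obtain ⟨g', hg', hspan⟩ :=
      exists_span_range_eq_sup_of_dvd (proj j₀) g i₀ fun i => hmin (i, j₀)
    have hC : span R (Set.range g') ≤ ker (proj j₀) :=
      span_le.2 <| by rintro _ ⟨i, rfl⟩; exact hg' i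
    have hv : ∀ a : R, a * g i₀ j₀ = 0 → a • g i₀ = 0 := fun a ha => funext fun j => by
      obtain ⟨q, hq⟩ := hmin (i₀, j)
      simp only [Pi.smul_apply, smul_eq_mul, Pi.zero_apply, hq, ← mul_assoc, ha, zero_mul]
    have : Module.Finite R (span R (Set.range g')) :=
      Module.Finite.span_of_finite R (Set.finite_range _)
    rw [hspan] at hfp ⊢
    obtain ⟨e⟩ := nonempty_linearEquiv_prod_of_finitePresentation hann hC hv hc
    have : Module.FinitePresentation R (R × span R (Set.range g')) := .of_equiv e
    have : Module.FinitePresentation R (span R (Set.range g')) :=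
      Module.finitePresentation_of_split_exact (inr R R _) (fst R R _) (inl R R _)
        (by ext; simp) inr_injective Function.Exact.inr_fst
    have := ih g' this
    exact Module.Free.of_equiv e.symm

theorem Module.free_of_injective_of_finitePresentation {M F : Type*} [AddCommGroup M]
    [Module R M] [AddCommGroup F] [Module R F] [Module.FinitePresentation R M]
    [Module.Free R F] [Module.Finite R F] (i : M →ₗ[R] F) (hi : Function.Injective i) :
    Module.Free R M := by
  let b := (Module.Free.chooseBasis R F).equivFun
  let j := b.toLinearMap ∘ₗ i
  have hj : Function.Injective j := b.injective.comp hi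
  obtain ⟨m, g, hg⟩ := fg_iff_exists_fin_generating_family.1 (fg_range j)
  let e : M ≃ₗ[R] span R (Set.range g) :=
    (LinearEquiv.ofInjective j hj).trans (.ofEq _ _ hg.symm)
  have : Module.FinitePresentation R (span R (Set.range g)) := .of_equiv e
  have := Module.free_span_range_of_finitePresentation hann g this
  exact Module.Free.of_equiv e.symm

end ChainRing

theorem Module.projective_of_injective_of_finitePresentation {A : Type*} [CommRing A]
    (harith : ∀ (m : Ideal A) (_ : m.IsMaximal), ∀ a b : Localization.AtPrime m, a ∣ b ∨ b ∣ a)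
    (hann : ∀ (m : Ideal A) (_ : m.IsMaximal), ∀ x : Localization.AtPrime m,
      x ≠ 0 → (∃ y : Localization.AtPrime m, y ≠ 0 ∧ x * y = 0) →
      ¬ (ker (toSpanSingleton (Localization.AtPrime m) (Localization.AtPrime m) x)).FG)
    {K F : Type*} [AddCommGroup K] [Module A K] [AddCommGroup F] [Module A F]
    [Module.FinitePresentation A K] [Module.Free A F] [Module.Finite A F]
    (i : K →ₗ[A] F) (hi : Function.Injective i) : Module.Projective A K := by
  refine Module.projective_of_localization_maximal fun P hP => ?_
  have : PreValuationRing (Localization.AtPrime P) :=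
    PreValuationRing.iff_dvd_total.2 ⟨harith P hP⟩
  have : Module.Free (Localization.AtPrime P) (LocalizedModule P.primeCompl F) :=
    Module.free_of_isLocalizedModule P.primeCompl (LocalizedModule.mkLinearMap P.primeCompl F)
  have := Module.free_of_injective_of_finitePresentation (hann P hP)
    (LocalizedModule.map P.primeCompl i) (LocalizedModule.map_injective _ _ hi)
  infer_instance

section Presentations

variable {A : Type u} [CommRing A]

theorem IsNPresented.finite {M : Type u} [AddCommGroup M] [Module A M] :
    ∀ {n : ℕ}, IsNPresented A n M → Module.Finite A M
  | 0, h => h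
  | _ + 1, ⟨_, f, hf, _⟩ => Module.Finite.of_surjective f hf

theorem IsNPresented.finitePresentation {M : Type u} [AddCommGroup M] [Module A M] {n : ℕ}
    (h : IsNPresented A (n + 1) M) : Module.FinitePresentation A M := by
  obtain ⟨k, f, hf, hker⟩ := h
  have := hker.finite
  exact Module.finitePresentation_of_surjective f hf (Module.Finite.iff_fg.1 this)

theorem projDimLE_one_of_surjective {M F : Type u} [AddCommGroup M] [Module A M]
    [AddCommGroup F] [Module A F] [Module.Free A F] (f : F →ₗ[A] M)
    (hf : Function.Surjective f) (hker : Module.Projective A (ker f)) : ProjDimLE A 1 M := by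
  let e := (Module.Free.chooseBasis A F).repr
  refine ⟨_, f ∘ₗ e.symm.toLinearMap, hf.comp e.symm.surjective, ?_⟩
  have hker' : ker (f ∘ₗ e.symm.toLinearMap) = (ker f).map e.toLinearMap := by
    rw [ker_comp, Submodule.comap_equiv_eq_map_symm, LinearEquiv.symm_symm]
  show Module.Projective A (ker (f ∘ₗ e.symm.toLinearMap))
  rw [hker']
  exact .of_equiv (e.submoduleMap (ker f))

end Presentations

/-- Let `A` be an arithmetical ring (every localization at a maximal ideal is a
valuation ring) such that for every maximal ideal `m` and every nonzero zero-divisor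
`x` of `A_m`, the annihilator of `x` in `A_m` is not finitely generated.  Then every
`3`-presented `A`-module has projective dimension at most `1`. -/
theorem stmt18 (A : Type u) [CommRing A]
    (harith : ∀ (m : Ideal A) (hm : m.IsMaximal),
      ∀ a b : Localization.AtPrime m, a ∣ b ∨ b ∣ a)
    (hann : ∀ (m : Ideal A) (hm : m.IsMaximal), ∀ x : Localization.AtPrime m,
      x ≠ 0 → (∃ y : Localization.AtPrime m, y ≠ 0 ∧ x * y = 0) →
      ¬ (LinearMap.ker (LinearMap.toSpanSingleton (Localization.AtPrime m)
          (Localization.AtPrime m) x)).FG) :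
    ∀ (M : Type u) [AddCommGroup M] [Module A M],
      IsNPresented A 3 M → ProjDimLE A 1 M := by
  intro M _ _ hM
  obtain ⟨k, f, hf, hker⟩ := hM
  have : Module.FinitePresentation A (ker f) := hker.finitePresentation
  exact projDimLE_one_of_surjective f hf <|
    Module.projective_of_injective_of_finitePresentation harith hann (ker f).subtype
      (ker f).injective_subtype
end
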